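/- Let G be a torsion-free finitely generated residually finite group and φ an automorphism of G. If φ has a nontrivial fixed point (some g ≠ e with φ(g) = g), then R(φ) = ∞. -/

import Mathlib

/-!
If `K` is a characteristic subgroup of finite index, `φ` induces an automorphism `ψ` of the finite
group `G ⧸ K` fixing the image `ḡ` of `g`, and `R(φ) ≥ R(ψ)`. In a finite group, Burnside's lemma
bounds `R(ψ)` below by the number of conjugacy classes meeting `Fix ψ`; the powers of `ḡ` of
distinct orders lie in distinct classes, so `R(ψ)` is at least the number of divisors of the order
of `ḡ`. As `g` has infinite order and `G` is residually finite, `K` can be chosen to make that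
number arbitrarily large: finitely generated groups have only finitely many subgroups of a given
index, so every finite-index subgroup contains a characteristic one.
-/

/-- A group is residually finite if every nontrivial element survives in some
finite quotient (equivalently, avoids some finite-index normal subgroup). -/
def IsResiduallyFinite (G : Type*) [Group G] : Prop :=
  ∀ g : G, g ≠ 1 → ∃ H : Subgroup G, H.Normal ∧ H.FiniteIndex ∧ g ∉ H

/-- The setoid of `φ`-twisted conjugacy: `g ~ h` iff `h = x * g * φ(x)⁻¹` for some `x`. -/
def twistedConjSetoid {G : Type*} [Group G] (φ : G ≃* G) : Setoid G where
  r g h := ∃ x : G, h = x * g * (φ x)⁻¹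
  iseqv := by
    refine ⟨fun g => ⟨1, by simp⟩, ?_, ?_⟩
    · rintro g h ⟨x, rfl⟩
      exact ⟨x⁻¹, by simp [mul_assoc]⟩
    · rintro a b c ⟨x, rfl⟩ ⟨y, rfl⟩
      exact ⟨y * x, by simp [map_mul, mul_assoc]⟩

open MulAction

instance MonoidHom.finite_of_fg {M P : Type*} [Monoid M] [Monoid.FG M] [Monoid P] [Finite P] :
    Finite (M →* P) := by
  obtain ⟨S, hS, hSfin⟩ := Monoid.fg_iff.mp ‹Monoid.FG M›
  have : Finite S := hSfin
  refine Finite.of_injective (fun f : M →* P => fun s : S => f s) fun f f' h => ?_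
  exact MonoidHom.eq_of_eqOn_denseM hS fun x hx => congrFun h ⟨x, hx⟩

namespace Subgroup

variable {G : Type*} [Group G] [Group.FG G]

theorem finite_setOf_index_eq {n : ℕ} (hn : n ≠ 0) : {H : Subgroup G | H.index = n}.Finite := by
  refine (Set.finite_range fun p : (G →* Equiv.Perm (Fin n)) × Fin n =>
    (stabilizer (Equiv.Perm (Fin n)) p.2).comap p.1).subset fun H (hH : H.index = n) => ?_
  have : H.FiniteIndex := ⟨hH ▸ hn⟩
  let e : G ⧸ H ≃ Fin n := Finite.equivFinOfCardEq hH
  refine ⟨((e.permCongrHom : Equiv.Perm (G ⧸ H) →* _).comp (toPermHom G (G ⧸ H)),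
    e (1 : G)), ?_⟩
  ext x
  simp [Equiv.permCongr_apply, QuotientGroup.eq]

theorem exists_characteristic_finiteIndex_le (H : Subgroup G) [H.FiniteIndex] :
    ∃ K : Subgroup G, K.Characteristic ∧ K.FiniteIndex ∧ K ≤ H := by
  let S := {K : Subgroup G | K.index = H.index}
  have : Finite S := (finite_setOf_index_eq FiniteIndex.index_ne_zero).to_subtype
  refine ⟨sInf S, characteristic_iff_le_comap.mpr fun φ x hx => ?_, ?_, sInf_le rfl⟩
  · exact mem_sInf.mpr fun K hK => mem_sInf.mp hx (K.comap φ.toMonoidHom)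
      ((index_comap_of_surjective K φ.surjective).trans hK)
  · rw [sInf_eq_iInf']
    exact finiteIndex_iInf fun K => ⟨K.2 ▸ FiniteIndex.index_ne_zero⟩

end Subgroup

theorem QuotientGroup.orderOf_mk_dvd_iff {G : Type*} [Group G] (K : Subgroup G) [K.Normal]
    (g : G) (n : ℕ) : orderOf (g : G ⧸ K) ∣ n ↔ g ^ n ∈ K := by
  rw [orderOf_dvd_iff_pow_eq_one, ← QuotientGroup.mk_pow, QuotientGroup.eq_one_iff]

namespace IsResiduallyFinite

variable {G : Type*} [Group G] [Group.FG G]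

theorem exists_characteristic_finiteIndex_notMem (hrf : IsResiduallyFinite G) {a : G}
    (ha : a ≠ 1) : ∃ K : Subgroup G, K.Characteristic ∧ K.FiniteIndex ∧ a ∉ K := by
  obtain ⟨H, -, hH, haH⟩ := hrf a ha
  obtain ⟨K, hK, hKfin, hKH⟩ := H.exists_characteristic_finiteIndex_le
  exact ⟨K, hK, hKfin, fun haK => haH (hKH haK)⟩

/-- Each step refines `K` to separate `g ^ d` from `1`, where `d` is the order of `g` modulo `K`;
the order of `g` then grows to a proper multiple of `d`. -/
theorem exists_characteristic_finiteIndex_le_card_divisors (hrf : IsResiduallyFinite G)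
    {g : G} (hg : ¬IsOfFinOrder g) (k : ℕ) :
    ∃ (K : Subgroup G) (_ : K.Characteristic), K.FiniteIndex ∧
      k ≤ (orderOf (g : G ⧸ K)).divisors.card := by
  induction k with
  | zero => exact ⟨⊤, inferInstance, inferInstance, Nat.zero_le _⟩
  | succ k ih =>
    obtain ⟨K, hK, hKfin, hk⟩ := ih
    set d := orderOf (g : G ⧸ K)
    have hgd : g ^ d ≠ 1 := fun h => hg (isOfFinOrder_iff_pow_eq_one.mpr ⟨d, orderOf_pos _, h⟩)
    obtain ⟨L, hL, hLfin, hgdL⟩ := hrf.exists_characteristic_finiteIndex_notMem hgd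
    refine ⟨K ⊓ L, inferInstance, inferInstance, ?_⟩
    set d' := orderOf (g : G ⧸ K ⊓ L)
    have hdd' : d ∣ d' := (QuotientGroup.orderOf_mk_dvd_iff K g d').mpr
      ((QuotientGroup.orderOf_mk_dvd_iff (K ⊓ L) g d').mp dvd_rfl).1
    have hd'd : ¬d' ∣ d := fun h => hgdL ((QuotientGroup.orderOf_mk_dvd_iff (K ⊓ L) g d).mp h).2
    have hd' : d' ≠ 0 := (orderOf_pos _).ne'
    have hsub : d.divisors ⊂ d'.divisors :=
      (Finset.ssubset_iff_of_subset (Nat.divisors_subset_of_dvd hd' hdd')).mpr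
        ⟨d', Nat.mem_divisors_self d' hd', fun h => hd'd (Nat.dvd_of_mem_divisors h)⟩
    exact hk.trans_lt (Finset.card_lt_card hsub)

end IsResiduallyFinite

def TwistedConj {Q : Type*} [Group Q] (_ψ : Q ≃* Q) : Type _ := Q

namespace TwistedConj

variable {Q : Type*} [Group Q] (ψ : Q ≃* Q)

def of : Q ≃ TwistedConj ψ := Equiv.refl Q

instance : MulAction Q (TwistedConj ψ) where
  smul a x := of ψ (a * (of ψ).symm x * (ψ a)⁻¹)
  one_smul x := show of ψ (1 * (of ψ).symm x * (ψ 1)⁻¹) = x by simp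
  mul_smul a b x :=
    show of ψ (a * b * _ * (ψ (a * b))⁻¹) = of ψ (a * (of ψ).symm (of ψ _) * _) by
      simp only [Equiv.symm_apply_apply, map_mul, mul_inv_rev, mul_assoc]

theorem smul_of (a x : Q) : a • of ψ x = of ψ (a * x * (ψ a)⁻¹) := rfl

instance [Finite Q] : Finite (TwistedConj ψ) := Finite.of_equiv Q (of ψ)

variable {ψ}

theorem of_mem_fixedBy_iff {a x : Q} :
    of ψ x ∈ fixedBy (TwistedConj ψ) a ↔ a * x * (ψ a)⁻¹ = x := by
  rw [mem_fixedBy, smul_of, (of ψ).apply_eq_iff_eq]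

variable (ψ) in
def quotientEquiv :
    Quotient (twistedConjSetoid ψ) ≃ orbitRel.Quotient Q (TwistedConj ψ) :=
  Quotient.congr (of ψ) fun a b => by
    rw [orbitRel_apply, mem_orbit_iff]
    simp only [smul_of, (of ψ).apply_eq_iff_eq]
    exact ⟨fun ⟨x, hx⟩ => ⟨x⁻¹, by simp [hx, mul_assoc]⟩,
      fun ⟨x, hx⟩ => ⟨x⁻¹, by simp [← hx, mul_assoc]⟩⟩

theorem nat_card_fixedBy_eq_nat_card_stabilizer {a x₀ : Q}
    (hx₀ : of ψ x₀ ∈ fixedBy (TwistedConj ψ) a) :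
    Nat.card (fixedBy (TwistedConj ψ) a) = Nat.card (stabilizer (ConjAct Q) a) := by
  rw [of_mem_fixedBy_iff] at hx₀
  have hψa : (ψ a)⁻¹ = x₀⁻¹ * a⁻¹ * x₀ := by
    calc (ψ a)⁻¹ = x₀⁻¹ * a⁻¹ * (a * x₀ * (ψ a)⁻¹) := by group
      _ = x₀⁻¹ * a⁻¹ * x₀ := by rw [hx₀]
  refine (Nat.card_congr (Equiv.subtypeEquiv
    (ConjAct.ofConjAct.toEquiv.trans ((Equiv.mulRight x₀).trans (of ψ))) fun c => ?_)).symm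
  obtain ⟨c, rfl⟩ := ConjAct.toConjAct.surjective c
  simp only [mem_stabilizer_iff, ConjAct.smul_def, Equiv.trans_apply, MulEquiv.toEquiv_eq_coe,
    MulEquiv.coe_toEquiv, ConjAct.ofConjAct_toConjAct, Equiv.coe_mulRight, of_mem_fixedBy_iff, hψa]
  rw [show a * (c * x₀) * (x₀⁻¹ * a⁻¹ * x₀) = a * c * a⁻¹ * x₀ by group, mul_left_inj,
    mul_inv_eq_iff_eq_mul, mul_inv_eq_iff_eq_mul]
  exact eq_comm

theorem nat_card_fixedBy_of_isConj {q a : Q} (hq : ψ q = q) (h : IsConj q a) :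
    Nat.card (fixedBy (TwistedConj ψ) a) = Nat.card (stabilizer (ConjAct Q) q) := by
  obtain ⟨y, rfl⟩ := isConj_iff.mp h
  have hy : of ψ (y * (ψ y)⁻¹) ∈ fixedBy (TwistedConj ψ) (y * q * y⁻¹) := by
    rw [of_mem_fixedBy_iff, map_mul, map_mul, map_inv, hq]
    group
  rw [nat_card_fixedBy_eq_nat_card_stabilizer hy]
  exact Nat.card_congr
    (stabilizerEquivStabilizerOfOrbitRel (ConjAct.mem_orbit_conjAct.mpr h.symm)).toEquiv

/-- By Burnside's lemma, `R(ψ) * |Q|` is the total number of twisted fixed points, and each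
conjugacy class of a `ψ`-fixed element carries `|Q|` of them. -/
theorem card_le_nat_card_quotient [Finite Q] {s : Finset Q} (hfix : ∀ q ∈ s, ψ q = q)
    (hs : (s : Set Q).Pairwise fun a b => ¬IsConj a b) :
    s.card ≤ Nat.card (Quotient (twistedConjSetoid ψ)) := by
  classical
  have := Fintype.ofFinite Q
  let F (a : Q) := Nat.card (fixedBy (TwistedConj ψ) a)
  let O (q : Q) := Finset.univ.filter (IsConj q)
  have hO : ∀ q ∈ s, ∑ a ∈ O q, F a = Nat.card Q := by
    intro q hq
    have hcard : (O q).card = (orbit (ConjAct Q) q).ncard := by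
      rw [← Set.ncard_coe_finset]
      congr 1
      ext a
      simp only [O, Finset.coe_filter, Finset.mem_univ, true_and, Set.mem_ofPred_eq,
        ConjAct.mem_orbit_conjAct, isConj_comm]
    rw [Finset.sum_congr rfl fun a ha =>
        nat_card_fixedBy_of_isConj (hfix q hq) (Finset.mem_filter.mp ha).2,
      Finset.sum_const, smul_eq_mul, hcard, ← index_stabilizer, mul_comm, Subgroup.card_mul_index]
    exact Nat.card_congr ConjAct.ofConjAct.toEquiv
  have hdisj : (s : Set Q).PairwiseDisjoint O := by
    intro q hq q' hq' hne
    refine Finset.disjoint_left.mpr fun a ha ha' => hs hq hq' hne ?_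
    simp only [O, Finset.mem_filter] at ha ha'
    exact ha.2.trans ha'.2.symm
  have := Fintype.ofFinite (TwistedConj ψ)
  have hburnside : ∑ a, F a = Nat.card (orbitRel.Quotient Q (TwistedConj ψ)) * Nat.card Q := by
    have := Fintype.ofFinite (orbitRel.Quotient Q (TwistedConj ψ))
    simpa [F, Nat.card_eq_fintype_card] using
      sum_card_fixedBy_eq_card_orbits_mul_card_group Q (TwistedConj ψ)
  refine Nat.le_of_mul_le_mul_right ?_ (Nat.card_pos (α := Q))
  calc s.card * Nat.card Q = ∑ q ∈ s, ∑ a ∈ O q, F a := by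
        rw [Finset.sum_congr rfl hO, Finset.sum_const, smul_eq_mul]
    _ = ∑ a ∈ s.biUnion O, F a := (Finset.sum_biUnion hdisj).symm
    _ ≤ ∑ a, F a := Finset.sum_le_sum_of_subset (Finset.subset_univ _)
    _ = Nat.card (Quotient (twistedConjSetoid ψ)) * Nat.card Q := by
        rw [hburnside, Nat.card_congr (quotientEquiv ψ)]

theorem card_divisors_orderOf_le [Finite Q] {q : Q} (hq : ψ q = q) :
    (orderOf q).divisors.card ≤ Nat.card (Quotient (twistedConjSetoid ψ)) := by
  classical
  set n := orderOf q
  have horder : ∀ m ∈ n.divisors, orderOf (q ^ (n / m)) = m := fun m hm =>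
    orderOf_pow_orderOf_div (orderOf_pos q).ne' (Nat.dvd_of_mem_divisors hm)
  have hinj : Set.InjOn (fun m => q ^ (n / m)) n.divisors := fun m hm m' hm' h => by
    rw [← horder m hm, ← horder m' hm']
    exact congrArg orderOf h
  rw [← Finset.card_image_of_injOn hinj]
  refine card_le_nat_card_quotient ?_ ?_
  · simp only [Finset.mem_image]
    rintro _ ⟨m, -, rfl⟩
    rw [map_pow, hq]
  · simp only [Finset.coe_image]
    rintro _ ⟨m, hm, rfl⟩ _ ⟨m', hm', rfl⟩ hne ⟨c, hc⟩
    have hmm' : m = m' := by rw [← horder m hm, ← horder m' hm']; exact hc.orderOf_eq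
    exact hne (hmm' ▸ rfl)

end TwistedConj

theorem nat_card_quotient_twistedConjSetoid_le_of_surjective {G H : Type*} [Group G] [Group H]
    {φ : G ≃* G} {ψ : H ≃* H} [Finite (Quotient (twistedConjSetoid φ))] {f : G →* H}
    (hf : Function.Surjective f) (hfφ : ∀ x, f (φ x) = ψ (f x)) :
    Nat.card (Quotient (twistedConjSetoid ψ)) ≤ Nat.card (Quotient (twistedConjSetoid φ)) := by
  have hcompat : ∀ ⦃a b : G⦄, twistedConjSetoid φ a b → twistedConjSetoid ψ (f a) (f b) := by
    rintro a _ ⟨x, rfl⟩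
    exact ⟨f x, by rw [map_mul, map_mul, map_inv, hfφ]⟩
  exact Nat.card_le_card_of_surjective _ (Quotient.map_surjective hcompat hf)

/-- If `G` is torsion-free, finitely generated, residually finite and `φ` has a
nontrivial fixed point, then `R(φ) = ∞`. -/
theorem stmt_14 {G : Type*} [Group G] [Group.FG G]
    (hrf : IsResiduallyFinite G) (htf : ∀ g : G, g ≠ 1 → ¬IsOfFinOrder g)
    (φ : G ≃* G) (g : G) (hg : g ≠ 1) (hfix : φ g = g) :
    Infinite (Quotient (twistedConjSetoid φ)) := by
  by_contra hfin
  have : Finite (Quotient (twistedConjSetoid φ)) := not_infinite_iff_finite.mp hfin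
  obtain ⟨K, hK, hKfin, hk⟩ := hrf.exists_characteristic_finiteIndex_le_card_divisors (htf g hg)
    (Nat.card (Quotient (twistedConjSetoid φ)) + 1)
  let ψ := QuotientGroup.congr K K φ (Subgroup.characteristic_iff_map_eq.mp hK φ)
  have hψ (x : G) : ψ x = φ x := QuotientGroup.congr_mk _ _ _ _ x
  have hψg : ψ g = g := by rw [hψ, hfix]
  have hle := (TwistedConj.card_divisors_orderOf_le hψg).trans
    (nat_card_quotient_twistedConjSetoid_le_of_surjective (QuotientGroup.mk'_surjective K)
      fun x => (hψ x).symm)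
  omega
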